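/- Let x : V → ℝ satisfy x_i ≥ 0 for all i, and relabel the vertices so that x_1 ≥ x_2 ≥ … ≥ x_{z−1} > 0 and x_z = … = x_n = 0 for some z ≤ n. For i ∈ {1,…,z−1} let S_i = {1,…,i}. Suppose Σ_{{i,j}∈E} (x_i − x_j)² ≤ λ, vol(supp(x)) ≤ m (equivalently μ(supp(x)) ≤ 1/2), Σ_{i∈V} d_i x_i² ≤ 1, and for some fixed k ∈ {1,…,z−1} and σ > 0, Σ_{i=k}^{n} d_i x_i² ≥ σ. Then there exists h with k ≤ h ≤ z−1 such that φ(S_h) ≤ (1/σ)·√(2λ). -/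

import Mathlib

open Finset

/-- Number of edges of `G` with exactly one endpoint in `S` (each such edge counted once). -/
def cutSize {n : ℕ} (G : SimpleGraph (Fin n)) [DecidableRel G.Adj] (S : Finset (Fin n)) : ℕ :=
  ∑ i ∈ S, ∑ j ∈ Sᶜ, if G.Adj i j then 1 else 0

/-- Volume of a vertex subset: the sum of the degrees of its vertices. -/
def vol {n : ℕ} (G : SimpleGraph (Fin n)) [DecidableRel G.Adj] (S : Finset (Fin n)) : ℕ :=
  ∑ i ∈ S, G.degree i

/-- Conductance `φ(S) = |E(S,S̄)| / min(vol(S), vol(S̄))`. -/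
noncomputable def conductance {n : ℕ} (G : SimpleGraph (Fin n)) [DecidableRel G.Adj]
    (S : Finset (Fin n)) : ℝ :=
  (cutSize G S : ℝ) / min (vol G S : ℝ) (vol G Sᶜ : ℝ)

/-- Sum of a symmetric function over the edges `{i,j} ∈ E` of `G` (each edge counted once). -/
noncomputable def edgeSum {n : ℕ} (G : SimpleGraph (Fin n)) [DecidableRel G.Adj]
    (f : Fin n → Fin n → ℝ) : ℝ :=
  (∑ i, ∑ j, if G.Adj i j then f i j else 0) / 2

/-- The sweep set consisting of the first `h` vertices (in the label order of `Fin n`).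
With 1-based paper indexing, `sweep h` is the paper's sweep cut `S_h = {1, …, h}`. -/
def sweep (n h : ℕ) : Finset (Fin n) := Finset.univ.filter (fun i => (i : ℕ) < h)

/-!
Let `f = sqProfile x`, so `f t = x_t²`, and `S_h = sweep n h`. For `k - 1 ≤ t < z - 1`
the cut `S_{t+1}` lies in `supp x`, so it is the smaller side and
`φ(S_{t+1}) · vol(S_{t+1}) ≤ |E(S_{t+1}, S̄_{t+1})|`. Averaging with the weights
`f t - f (t + 1) ≥ 0`, some `h = t + 1` has
`φ(S_h) · Σ_t (f t - f (t + 1)) vol(S_{t+1}) ≤ Σ_t (f t - f (t + 1)) |E(S_{t+1}, S̄_{t+1})|`.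
Exchanging the sums, the left-hand sum is `Σ_i d_i f (max i (k - 1)) ≥ σ`, and the right-hand
sum charges each edge `{i, j}` at most `|x_i² - x_j²|`; Cauchy–Schwarz bounds
`Σ_{ij∈E} |x_i - x_j| |x_i + x_j|` by `√λ · √(2 Σ_i d_i x_i²) ≤ √(2λ)`.
-/

lemma sum_Ico_sub' (f : ℕ → ℝ) {a b : ℕ} (hab : a ≤ b) :
    ∑ t ∈ Ico a b, (f t - f (t + 1)) = f a - f b := by
  rw [← neg_sub (f b), ← sum_Ico_sub f hab, ← sum_neg_distrib]
  simp only [neg_sub]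

lemma Ico_filter_le_eq_Ico_max_max (i a b : ℕ) :
    (Ico a b).filter (i ≤ ·) = Ico (max i a) (max i b) := by
  ext t
  simp only [mem_filter, mem_Ico, max_le_iff, lt_max_iff]
  omega

lemma sum_filter_sub_succ_le_max {f : ℕ → ℝ} (hf : Antitone f) (s : Finset ℕ) (i j : ℕ) :
    ∑ t ∈ s with i ≤ t ∧ t < j, (f t - f (t + 1)) ≤ max (f i - f j) 0 := by
  have hsub : s.filter (fun t => i ≤ t ∧ t < j) ⊆ Ico i j := fun t ht => by
    simp only [mem_filter, mem_Ico] at ht ⊢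
    exact ht.2
  refine (sum_le_sum_of_subset_of_nonneg hsub fun t _ _ => sub_nonneg.2 (hf t.le_succ)).trans ?_
  rcases le_total i j with hij | hji
  · rw [sum_Ico_sub' f hij]
    exact le_max_left _ _
  · rw [Ico_eq_empty_of_le hji, sum_empty]
    exact le_max_right _ _

lemma exists_mul_sum_le_sum {ι : Type*} {s : Finset ι} (hs : s.Nonempty) {φ D N c : ι → ℝ}
    (hD : ∀ t ∈ s, 0 ≤ D t) (hc : ∀ t ∈ s, 0 ≤ c t) (hN : ∀ t ∈ s, φ t * D t ≤ N t) :
    ∃ t ∈ s, φ t * ∑ u ∈ s, c u * D u ≤ ∑ u ∈ s, c u * N u := by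
  obtain ⟨t, ht, hmin⟩ := exists_min_image s φ hs
  refine ⟨t, ht, ?_⟩
  rw [mul_sum]
  refine sum_le_sum fun u hu => ?_
  calc φ t * (c u * D u) = c u * (φ t * D u) := by ring
    _ ≤ c u * (φ u * D u) := by gcongr; exacts [hc u hu, hD u hu, hmin u hu]
    _ ≤ c u * N u := mul_le_mul_of_nonneg_left (hN u hu) (hc u hu)

lemma mem_sweep {n h : ℕ} {i : Fin n} : i ∈ sweep n h ↔ (i : ℕ) < h := by
  simp [sweep]

section Profile

variable {n : ℕ} {x : Fin n → ℝ}

def sqProfile (x : Fin n → ℝ) (t : ℕ) : ℝ :=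
  if ht : t < n then x ⟨t, ht⟩ ^ 2 else 0

@[simp]
lemma sqProfile_coe (i : Fin n) : sqProfile x i = x i ^ 2 := dif_pos i.isLt

lemma sqProfile_nonneg (t : ℕ) : 0 ≤ sqProfile x t := by
  unfold sqProfile
  split_ifs <;> positivity

lemma antitone_sqProfile (hx0 : ∀ i, 0 ≤ x i) (hsorted : ∀ i j : Fin n, i ≤ j → x j ≤ x i) :
    Antitone (sqProfile x) := fun s t hst => by
  by_cases ht : t < n
  · simp only [sqProfile, dif_pos ht, dif_pos (hst.trans_lt ht)]
    exact pow_le_pow_left₀ (hx0 _) (hsorted ⟨s, _⟩ ⟨t, ht⟩ hst) 2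
  · simpa only [sqProfile, dif_neg ht] using sqProfile_nonneg s

lemma sqProfile_eq_zero_of_le {b : ℕ} (hzero : ∀ i : Fin n, b ≤ (i : ℕ) → x i = 0) (t : ℕ)
    (ht : b ≤ t) : sqProfile x t = 0 := by
  by_cases htn : t < n
  · simp [sqProfile, dif_pos htn, hzero ⟨t, htn⟩ ht]
  · simp only [sqProfile, dif_neg htn]

end Profile

section Graph

variable {n : ℕ} (G : SimpleGraph (Fin n)) [DecidableRel G.Adj]

lemma vol_add_vol_compl (S : Finset (Fin n)) : vol G S + vol G Sᶜ = 2 * #G.edgeFinset := by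
  rw [vol, vol, sum_add_sum_compl, G.sum_degrees_eq_twice_card_edges]

lemma vol_le_vol_compl_of_subset {S T : Finset (Fin n)} (hST : S ⊆ T)
    (hT : vol G T ≤ #G.edgeFinset) : vol G S ≤ vol G Sᶜ := by
  have hS : vol G S ≤ vol G T := sum_le_sum_of_subset hST
  have := vol_add_vol_compl G S
  omega

lemma conductance_nonneg (S : Finset (Fin n)) : 0 ≤ conductance G S := by
  unfold conductance
  positivity

lemma conductance_mul_vol_le_cutSize {S : Finset (Fin n)} (hS : vol G S ≤ vol G Sᶜ) :
    conductance G S * vol G S ≤ cutSize G S := by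
  rw [conductance, min_eq_left (by exact_mod_cast hS)]
  rcases eq_or_ne (vol G S : ℝ) 0 with h0 | h0
  · rw [h0, mul_zero]
    positivity
  · rw [div_mul_cancel₀ _ h0]

lemma edgeSum_mono {f g : Fin n → Fin n → ℝ} (hfg : ∀ i j, G.Adj i j → f i j ≤ g i j) :
    edgeSum G f ≤ edgeSum G g := by
  unfold edgeSum
  gcongr with i _ j _
  split_ifs with h
  · exact hfg i j h
  · rfl

lemma edgeSum_add_eq_sum_degree_mul (g : Fin n → ℝ) :
    edgeSum G (fun i j => g i + g j) = ∑ i, (G.degree i : ℝ) * g i := by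
  have hrow : ∀ i, ∑ j, (if G.Adj i j then g i else 0) = G.degree i * g i := fun i => by
    rw [← sum_filter, sum_const, nsmul_eq_mul, ← G.neighborFinset_eq_filter,
      G.card_neighborFinset_eq_degree]
  have hcol : ∑ i, ∑ j, (if G.Adj i j then g j else 0) =
      ∑ i, ∑ j, (if G.Adj i j then g i else 0) := by
    rw [sum_comm]
    simp_rw [G.adj_comm]
  have hsplit : ∀ i j, (if G.Adj i j then g i + g j else 0) =
      (if G.Adj i j then g i else 0) + (if G.Adj i j then g j else 0) := fun i j => by
    split_ifs <;> simp
  simp only [edgeSum, hsplit, sum_add_distrib, hcol, hrow]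
  ring

lemma edgeSum_eq_sum_prod (f : Fin n → Fin n → ℝ) :
    edgeSum G f = (∑ p : Fin n × Fin n, if G.Adj p.1 p.2 then f p.1 p.2 else 0) / 2 := by
  rw [edgeSum, Fintype.sum_prod_type]

lemma edgeSum_mul_le_sqrt_mul_sqrt (f g : Fin n → Fin n → ℝ) :
    edgeSum G (fun i j => f i j * g i j) ≤
      √(edgeSum G (fun i j => f i j ^ 2)) * √(edgeSum G (fun i j => g i j ^ 2)) := by
  set F : Fin n × Fin n → ℝ := fun p => if G.Adj p.1 p.2 then f p.1 p.2 else 0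
  set H : Fin n × Fin n → ℝ := fun p => if G.Adj p.1 p.2 then g p.1 p.2 else 0
  have hFH : ∀ p : Fin n × Fin n,
      (if G.Adj p.1 p.2 then f p.1 p.2 * g p.1 p.2 else 0) = F p * H p := fun p => by
    simp only [F, H]; split_ifs <;> simp
  have hF : ∀ p : Fin n × Fin n,
      (if G.Adj p.1 p.2 then f p.1 p.2 ^ 2 else 0) = F p ^ 2 := fun p => by
    simp only [F]; split_ifs <;> simp
  have hH : ∀ p : Fin n × Fin n,
      (if G.Adj p.1 p.2 then g p.1 p.2 ^ 2 else 0) = H p ^ 2 := fun p => by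
    simp only [H]; split_ifs <;> simp
  simp only [edgeSum_eq_sum_prod, hFH, hF, hH]
  rw [Real.sqrt_div' _ zero_le_two, Real.sqrt_div' _ zero_le_two, div_mul_div_comm,
    Real.mul_self_sqrt zero_le_two]
  gcongr
  exact Real.sum_mul_le_sqrt_mul_sqrt _ _ _

lemma edgeSum_abs_sq_sub_sq_le (x : Fin n → ℝ) :
    edgeSum G (fun i j => |x i ^ 2 - x j ^ 2|) ≤
      √(edgeSum G (fun i j => (x i - x j) ^ 2)) * √(2 * ∑ i, (G.degree i : ℝ) * x i ^ 2) := by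
  have hfac : (fun i j => |x i ^ 2 - x j ^ 2|) = fun i j => |x i - x j| * |x i + x j| := by
    funext i j
    rw [sq_sub_sq, abs_mul, mul_comm]
  have hplus : edgeSum G (fun i j => |x i + x j| ^ 2) ≤ 2 * ∑ i, (G.degree i : ℝ) * x i ^ 2 :=
    calc edgeSum G (fun i j => |x i + x j| ^ 2)
        ≤ edgeSum G (fun i j => 2 * x i ^ 2 + 2 * x j ^ 2) := edgeSum_mono G fun i j _ => by
          rw [sq_abs]
          nlinarith [sq_nonneg (x i - x j)]
      _ = 2 * ∑ i, (G.degree i : ℝ) * x i ^ 2 := by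
          rw [edgeSum_add_eq_sum_degree_mul G (fun i => 2 * x i ^ 2), mul_sum]
          exact sum_congr rfl fun i _ => by ring
  rw [hfac]
  refine (edgeSum_mul_le_sqrt_mul_sqrt G _ _).trans ?_
  simp only [sq_abs]
  gcongr
  simpa only [sq_abs] using hplus

theorem sum_sub_succ_mul_vol_sweep (f : ℕ → ℝ) {a b : ℕ} (hab : a ≤ b) :
    ∑ t ∈ Ico a b, (f t - f (t + 1)) * (vol G (sweep n (t + 1)) : ℝ) =
      ∑ i, (G.degree i : ℝ) * (f (max i a) - f (max i b)) := by
  simp only [vol, Nat.cast_sum, mul_sum]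
  rw [sum_comm' (t' := univ) (s' := fun i : Fin n => (Ico a b).filter ((i : ℕ) ≤ ·))]
  · refine sum_congr rfl fun i _ => ?_
    rw [← sum_mul, mul_comm, Ico_filter_le_eq_Ico_max_max,
      sum_Ico_sub' f (max_le_max_left _ hab)]
  · intro t i
    simp only [mem_sweep, mem_filter, mem_univ, mem_Ico, and_true]
    omega

lemma sum_degree_mul_le_sum_sub_succ_mul_vol_sweep {f : ℕ → ℝ} (hf : ∀ t, 0 ≤ f t) {a b : ℕ}
    (hab : a ≤ b) (hfb : ∀ t, b ≤ t → f t = 0) :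
    ∑ i ∈ univ.filter (fun i : Fin n => a ≤ (i : ℕ)), (G.degree i : ℝ) * f i ≤
      ∑ t ∈ Ico a b, (f t - f (t + 1)) * (vol G (sweep n (t + 1)) : ℝ) := by
  rw [sum_sub_succ_mul_vol_sweep G f hab, sum_filter]
  refine sum_le_sum fun i _ => ?_
  rw [hfb _ (le_max_right _ _), sub_zero]
  split_ifs with hi
  · rw [max_eq_left hi]
  · exact mul_nonneg (Nat.cast_nonneg _) (hf _)

lemma cutSize_sweep_eq_sum (h : ℕ) :
    (cutSize G (sweep n h) : ℝ) =
      ∑ i, ∑ j, if G.Adj i j ∧ (i : ℕ) < h ∧ h ≤ (j : ℕ) then (1 : ℝ) else 0 := by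
  simp only [cutSize, sweep, compl_filter, sum_filter, Nat.cast_sum, Nat.cast_ite, Nat.cast_one,
    Nat.cast_zero]
  refine sum_congr rfl fun i _ => ?_
  split_ifs with hi
  · refine sum_congr rfl fun j _ => ?_
    by_cases hj : h ≤ (j : ℕ) <;> by_cases ha : G.Adj i j <;> simp [hi, hj, ha]
  · simp [hi]

lemma sum_adj_max_sub_eq_edgeSum_abs (f : Fin n → ℝ) :
    ∑ i, ∑ j, (if G.Adj i j then max (f i - f j) 0 else 0) =
      edgeSum G (fun i j => |f i - f j|) := by
  have hswap : ∑ i, ∑ j, (if G.Adj i j then max (f i - f j) 0 else 0) =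
      ∑ i, ∑ j, (if G.Adj i j then max (-(f i - f j)) 0 else 0) := by
    rw [sum_comm]
    simp_rw [G.adj_comm, neg_sub]
  rw [edgeSum, eq_div_iff two_ne_zero, mul_two]
  nth_rw 2 [hswap]
  simp only [← sum_add_distrib]
  refine sum_congr rfl fun i _ => sum_congr rfl fun j _ => ?_
  split_ifs
  · exact max_zero_add_max_neg_zero_eq_abs_self _
  · simp

theorem sum_sub_succ_mul_cutSize_sweep_le {f : ℕ → ℝ} (hf : Antitone f) (s : Finset ℕ) :
    ∑ t ∈ s, (f t - f (t + 1)) * (cutSize G (sweep n (t + 1)) : ℝ) ≤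
      edgeSum G (fun i j => |f i - f j|) := by
  rw [← sum_adj_max_sub_eq_edgeSum_abs G (fun i => f i)]
  simp_rw [cutSize_sweep_eq_sum, mul_sum]
  rw [sum_comm]
  refine sum_le_sum fun i _ => ?_
  rw [sum_comm]
  refine sum_le_sum fun j _ => ?_
  split_ifs with hadj
  · simp only [hadj, true_and, mul_boole, Nat.lt_succ_iff, Nat.succ_le_iff]
    rw [← sum_filter]
    exact sum_filter_sub_succ_le_max hf s i j
  · simp [hadj]

lemma sum_sub_succ_mul_sqProfile_cutSize_sweep_le {x : Fin n → ℝ} (hx0 : ∀ i, 0 ≤ x i)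
    (hsorted : ∀ i j : Fin n, i ≤ j → x j ≤ x i) (s : Finset ℕ) :
    ∑ t ∈ s, (sqProfile x t - sqProfile x (t + 1)) * (cutSize G (sweep n (t + 1)) : ℝ) ≤
      √(edgeSum G (fun i j => (x i - x j) ^ 2)) * √(2 * ∑ i, (G.degree i : ℝ) * x i ^ 2) := by
  refine (sum_sub_succ_mul_cutSize_sweep_le G (antitone_sqProfile hx0 hsorted) s).trans ?_
  simp only [sqProfile_coe]
  exact edgeSum_abs_sq_sub_sq_le G x

end Graph

/-- Vertex labels are 0-based: the paper's vertex `p` is `p - 1`, so `Σ_{i=k}^n` is the sum over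
`k - 1 ≤ i`, while the paper's `S_h` is `sweep n h`. -/
theorem sweep_cut_cheeger_general {n : ℕ} (G : SimpleGraph (Fin n)) [DecidableRel G.Adj]
    (m : ℕ) (hm : m = G.edgeFinset.card)
    (x : Fin n → ℝ) (hx0 : ∀ i, 0 ≤ x i)
    (hsorted : ∀ i j : Fin n, i ≤ j → x j ≤ x i)
    (z : ℕ)
    (hpos : ∀ i : Fin n, (i : ℕ) < z - 1 → 0 < x i)
    (hzero : ∀ i : Fin n, z - 1 ≤ (i : ℕ) → x i = 0)
    (lam : ℝ) (hlam : edgeSum G (fun i j => (x i - x j) ^ 2) ≤ lam)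
    (hsupp : vol G (Finset.univ.filter (fun i => x i ≠ 0)) ≤ m)
    (hnorm : ∑ i, (G.degree i : ℝ) * x i ^ 2 ≤ 1)
    (k : ℕ) (hk1 : 1 ≤ k) (hkz : k ≤ z - 1)
    (σ : ℝ) (hσ : 0 < σ)
    (htail : σ ≤ ∑ i ∈ Finset.univ.filter (fun i : Fin n => k - 1 ≤ (i : ℕ)),
      (G.degree i : ℝ) * x i ^ 2) :
    ∃ h : ℕ, k ≤ h ∧ h ≤ z - 1 ∧
      conductance G (sweep n h) ≤ (1 / σ) * Real.sqrt (2 * lam) := by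
  set f := sqProfile x
  have hbalanced (h : ℕ) (hh : h ≤ z - 1) : vol G (sweep n h) ≤ vol G (sweep n h)ᶜ := by
    refine vol_le_vol_compl_of_subset G (fun i hi => ?_) (hm ▸ hsupp)
    simp only [mem_filter, mem_univ, true_and]
    exact (hpos i ((mem_sweep.1 hi).trans_le hh)).ne'
  obtain ⟨t, ht, hφ⟩ := exists_mul_sum_le_sum (s := Ico (k - 1) (z - 1))
    (φ := fun t => conductance G (sweep n (t + 1))) (c := fun t => f t - f (t + 1))
    (nonempty_Ico.2 (by omega)) (fun _ _ => Nat.cast_nonneg _)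
    (fun t _ => sub_nonneg.2 (antitone_sqProfile hx0 hsorted t.le_succ))
    (fun t ht => conductance_mul_vol_le_cutSize G (hbalanced _ (by rw [mem_Ico] at ht; omega)))
  have hσ_le : σ ≤ ∑ u ∈ Ico (k - 1) (z - 1),
      (f u - f (u + 1)) * (vol G (sweep n (u + 1)) : ℝ) := by
    refine (htail.trans_eq ?_).trans (sum_degree_mul_le_sum_sub_succ_mul_vol_sweep G
      sqProfile_nonneg (by omega) (sqProfile_eq_zero_of_le hzero))
    simp only [sqProfile_coe]
  have hcut_le : ∑ u ∈ Ico (k - 1) (z - 1),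
      (f u - f (u + 1)) * (cutSize G (sweep n (u + 1)) : ℝ) ≤ √(2 * lam) :=
    calc _ ≤ √(edgeSum G (fun i j => (x i - x j) ^ 2)) *
            √(2 * ∑ i, (G.degree i : ℝ) * x i ^ 2) :=
          sum_sub_succ_mul_sqProfile_cutSize_sweep_le G hx0 hsorted _
      _ ≤ √lam * √2 := by gcongr; linarith
      _ = √(2 * lam) := by rw [mul_comm, Real.sqrt_mul zero_le_two]
  rw [mem_Ico] at ht
  refine ⟨t + 1, by omega, by omega, ?_⟩
  rw [one_div_mul_eq_div, le_div_iff₀ hσ]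
  calc conductance G (sweep n (t + 1)) * σ
      ≤ conductance G (sweep n (t + 1)) * ∑ u ∈ Ico (k - 1) (z - 1),
          (f u - f (u + 1)) * (vol G (sweep n (u + 1)) : ℝ) :=
        mul_le_mul_of_nonneg_left hσ_le (conductance_nonneg G _)
    _ ≤ √(2 * lam) := hφ.trans hcut_le

/-- **Lemma 3.1 (lem:cheeger).** A sweep-cut variant of Cheeger's inequality.
Vertices are relabeled so that (with 1-based paper indexing) `x_1 ≥ … ≥ x_{z-1} > 0` and
`x_z = … = x_n = 0`; in the `Fin n` (0-based) labels, the paper's vertex `p` is `p − 1`,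
and the paper's sweep cut `S_h` is `sweep n h`.  If `∑_{{i,j}∈E}(x_i−x_j)² ≤ λ`,
`vol(supp(x)) ≤ m`, `∑ d_i x_i² ≤ 1`, and `∑_{i=k}^{n} d_i x_i² ≥ σ` for some
`1 ≤ k ≤ z−1` and `σ > 0`, then some sweep cut `S_h` with `k ≤ h ≤ z−1` has
`φ(S_h) ≤ (1/σ)·√(2λ)`. -/
theorem sweep_cut_cheeger {n : ℕ} (G : SimpleGraph (Fin n)) [DecidableRel G.Adj]
    (m : ℕ) (hm : m = G.edgeFinset.card) (hm1 : 1 ≤ m)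
    (hdeg : ∀ i, 0 < G.degree i)
    (x : Fin n → ℝ) (hx0 : ∀ i, 0 ≤ x i)
    (hsorted : ∀ i j : Fin n, i ≤ j → x j ≤ x i)
    (z : ℕ) (hz1 : 1 ≤ z) (hzn : z ≤ n)
    (hpos : ∀ i : Fin n, (i : ℕ) < z - 1 → 0 < x i)
    (hzero : ∀ i : Fin n, z - 1 ≤ (i : ℕ) → x i = 0)
    (lam : ℝ) (hlam : edgeSum G (fun i j => (x i - x j) ^ 2) ≤ lam)
    (hsupp : vol G (Finset.univ.filter (fun i => x i ≠ 0)) ≤ m)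
    (hnorm : ∑ i, (G.degree i : ℝ) * x i ^ 2 ≤ 1)
    (k : ℕ) (hk1 : 1 ≤ k) (hkz : k ≤ z - 1)
    (σ : ℝ) (hσ : 0 < σ)
    (htail : σ ≤ ∑ i ∈ Finset.univ.filter (fun i : Fin n => k - 1 ≤ (i : ℕ)),
      (G.degree i : ℝ) * x i ^ 2) :
    ∃ h : ℕ, k ≤ h ∧ h ≤ z - 1 ∧
      conductance G (sweep n h) ≤ (1 / σ) * Real.sqrt (2 * lam) :=
  sweep_cut_cheeger_general G m hm x hx0 hsorted z hpos hzero lam hlam hsupp hnorm k hk1 hkz σ hσ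
    htail
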